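/- Let n > 2, let 1 < p < ∞, and let s ∈ Δₙ be a point of the probability simplex whose support has size greater than 2 (i.e., more than two coordinates are nonzero) and which satisfies s_i = 1/2 for some index i. Then the interpolation inequality is strict for M(s) = Diag(s) − s sᵀ: ‖M(s)‖_p < ‖M(s)‖₁^{1/p} ‖M(s)‖_∞^{1 − 1/p} = 1/2. -/

import Mathlib

open scoped ENNReal BigOperators

/-- The softmax function with inverse temperature `lam`. -/
noncomputable def softmax {n : ℕ} (lam : ℝ) (x : Fin n → ℝ) : Fin n → ℝ :=
  fun i => Real.exp (lam * x i) / ∑ j, Real.exp (lam * x j)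

/-- The ℓ_p norm on `Fin n → ℝ`, for `p ∈ [1, ∞]`. -/
noncomputable def lpNorm {n : ℕ} (p : ℝ≥0∞) (x : Fin n → ℝ) : ℝ :=
  if p = ⊤ then ⨆ i, |x i| else (∑ i, |x i| ^ p.toReal) ^ (1 / p.toReal)

/-- The ℓ_p-induced operator norm of a matrix. -/
noncomputable def opNorm {n m : ℕ} (p : ℝ≥0∞) (A : Matrix (Fin n) (Fin m) ℝ) : ℝ :=
  ⨆ v : {v : Fin m → ℝ // v ≠ 0}, lpNorm p (A.mulVec v.val) / lpNorm p v.val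

/-- The matrix `Diag(s) - s sᵀ` (Jacobian of softmax with `lam = 1` at a point with value `s`). -/
noncomputable def softmaxJac {n : ℕ} (s : Fin n → ℝ) : Matrix (Fin n) (Fin n) ℝ :=
  Matrix.diagonal s - Matrix.vecMulVec s s

/-- The open (interior of the) probability simplex. -/
def openSimplex (n : ℕ) : Set (Fin n → ℝ) :=
  {u | (∀ i, 0 < u i) ∧ ∑ i, u i = 1}

/-- The (closed) probability simplex. -/
def probSimplex (n : ℕ) : Set (Fin n → ℝ) :=
  {u | (∀ i, 0 ≤ u i) ∧ ∑ i, u i = 1}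

/-!
Every row and every column of `|M(s)|` sums to `2 sᵢ (1 - sᵢ) ≤ 1/2`, with equality exactly when
`sᵢ = 1/2`; hence `‖M(s)‖₁ = ‖M(s)‖_∞ = 1/2`. For `1 < p < ∞`, Hölder's inequality on each row
gives the Schur test `‖A v‖_p^p ≤ (maxⱼ cⱼ) ‖v‖_p^p` with `cⱼ = ∑ᵢ rᵢ^(p-1) |Aᵢⱼ|`, `rᵢ` the
row sums of `|A|`. When all row and column sums are at most `r`, `cⱼ < r^p` as soon as column `j`
sums to less than `r` or has a nonzero entry in a row summing to less than `r`. If the support of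
`s` has more than two points and `s_k = 1/2`, every other coordinate is `< 1/2`, so every column
but the `k`-th sums to less than `1/2`, and column `k` has a nonzero entry in a row `i ≠ k` of the
support, whose sum is less than `1/2`.
-/

open Finset Matrix

section LpNorm

variable {n : ℕ}

@[simp]
lemma lpNorm_top (x : Fin n → ℝ) : lpNorm ⊤ x = ⨆ i, |x i| := by simp [lpNorm]

@[simp]
lemma lpNorm_one (x : Fin n → ℝ) : lpNorm 1 x = ∑ i, |x i| := by simp [lpNorm]

lemma lpNorm_of_ne_top {p : ℝ≥0∞} (hp : p ≠ ⊤) (x : Fin n → ℝ) :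
    lpNorm p x = (∑ i, |x i| ^ p.toReal) ^ (1 / p.toReal) := by simp [lpNorm, hp]

lemma abs_le_lpNorm_top (x : Fin n → ℝ) (i : Fin n) : |x i| ≤ lpNorm ⊤ x := by
  rw [lpNorm_top]
  exact le_ciSup (Set.finite_range fun i => |x i|).bddAbove i

lemma lpNorm_nonneg (p : ℝ≥0∞) (x : Fin n → ℝ) : 0 ≤ lpNorm p x := by
  by_cases hp : p = ⊤
  · subst hp
    rw [lpNorm_top]
    exact Real.iSup_nonneg fun i => abs_nonneg _
  · rw [lpNorm_of_ne_top hp]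
    positivity

lemma lpNorm_pos {p : ℝ≥0∞} {x : Fin n → ℝ} (hx : x ≠ 0) : 0 < lpNorm p x := by
  obtain ⟨i, hi⟩ := Function.ne_iff.1 hx
  by_cases hp : p = ⊤
  · subst hp
    exact (abs_pos.2 hi).trans_le (abs_le_lpNorm_top x i)
  · rw [lpNorm_of_ne_top hp]
    exact Real.rpow_pos_of_pos (sum_pos' (fun j _ => by positivity)
      ⟨i, mem_univ i, Real.rpow_pos_of_pos (abs_pos.2 hi) _⟩) _

end LpNorm

section OpNorm

variable {m n : ℕ} {p : ℝ≥0∞} {A : Matrix (Fin m) (Fin n) ℝ} {c : ℝ}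

lemma opNorm_le_of_forall_le (hc : 0 ≤ c) (h : ∀ v, lpNorm p (A *ᵥ v) ≤ c * lpNorm p v) :
    opNorm p A ≤ c :=
  Real.iSup_le (fun v => (div_le_iff₀ (lpNorm_pos v.2)).2 (h v)) hc

lemma opNorm_eq_of_forall_le_of_le (hc : 0 ≤ c) (h : ∀ v, lpNorm p (A *ᵥ v) ≤ c * lpNorm p v)
    {v₀ : Fin n → ℝ} (hv₀ : v₀ ≠ 0) (hA : c * lpNorm p v₀ ≤ lpNorm p (A *ᵥ v₀)) :
    opNorm p A = c := by
  refine le_antisymm (opNorm_le_of_forall_le hc h) ?_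
  have hbdd : BddAbove (Set.range fun v : {v : Fin n → ℝ // v ≠ 0} =>
      lpNorm p (A *ᵥ v.1) / lpNorm p v.1) :=
    ⟨c, Set.forall_mem_range.2 fun v => (div_le_iff₀ (lpNorm_pos v.2)).2 (h v)⟩
  calc c ≤ lpNorm p (A *ᵥ v₀) / lpNorm p v₀ := (le_div_iff₀ (lpNorm_pos hv₀)).2 hA
    _ ≤ opNorm p A := le_ciSup hbdd ⟨v₀, hv₀⟩

end OpNorm

section RowColumnSums

variable {m n : ℕ} (A : Matrix (Fin m) (Fin n) ℝ)

lemma abs_mulVec_le (v : Fin n → ℝ) (i : Fin m) : |(A *ᵥ v) i| ≤ ∑ j, |A i j| * |v j| := by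
  simpa only [mulVec, dotProduct, abs_mul] using abs_sum_le_sum_abs (fun j => A i j * v j) univ

lemma lpNorm_one_mulVec_le {c : ℝ} (h : ∀ j, ∑ i, |A i j| ≤ c) (v : Fin n → ℝ) :
    lpNorm 1 (A *ᵥ v) ≤ c * lpNorm 1 v := by
  rw [lpNorm_one, lpNorm_one, mul_sum]
  calc ∑ i, |(A *ᵥ v) i| ≤ ∑ i, ∑ j, |A i j| * |v j| := sum_le_sum fun i _ => abs_mulVec_le A v i
    _ = ∑ j, (∑ i, |A i j|) * |v j| := by rw [sum_comm]; simp only [sum_mul]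
    _ ≤ ∑ j, c * |v j| := sum_le_sum fun j _ => mul_le_mul_of_nonneg_right (h j) (abs_nonneg _)

lemma lpNorm_top_mulVec_le {c : ℝ} (hc : 0 ≤ c) (h : ∀ i, ∑ j, |A i j| ≤ c) (v : Fin n → ℝ) :
    lpNorm ⊤ (A *ᵥ v) ≤ c * lpNorm ⊤ v := by
  refine (lpNorm_top _).trans_le (Real.iSup_le (fun i => ?_) (by positivity [lpNorm_nonneg ⊤ v]))
  calc |(A *ᵥ v) i| ≤ ∑ j, |A i j| * |v j| := abs_mulVec_le A v i
    _ ≤ ∑ j, |A i j| * lpNorm ⊤ v :=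
      sum_le_sum fun j _ => mul_le_mul_of_nonneg_left (abs_le_lpNorm_top v j) (abs_nonneg _)
    _ ≤ c * lpNorm ⊤ v := by rw [← sum_mul]; exact mul_le_mul_of_nonneg_right (h i) (lpNorm_nonneg _ _)

lemma abs_mulVec_rpow_le {q : ℝ} (hq : 1 < q) (v : Fin n → ℝ) (i : Fin m) :
    |(A *ᵥ v) i| ^ q ≤ (∑ j, |A i j|) ^ (q - 1) * ∑ j, |A i j| * |v j| ^ q := by
  have hrow : 0 ≤ ∑ j, |A i j| := sum_nonneg fun j _ => abs_nonneg _
  have hsum : 0 ≤ ∑ j, |A i j| * |v j| ^ q := sum_nonneg fun j _ => by positivity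
  calc |(A *ᵥ v) i| ^ q
      ≤ ((∑ j, |A i j|) ^ (1 - q⁻¹) * (∑ j, |A i j| * |v j| ^ q) ^ q⁻¹) ^ q :=
        Real.rpow_le_rpow (abs_nonneg _) ((abs_mulVec_le A v i).trans
          (Real.inner_le_weight_mul_Lp_of_nonneg _ hq.le _ _ (fun j => abs_nonneg _)
            (fun j => abs_nonneg _))) (by linarith)
    _ = (∑ j, |A i j|) ^ (q - 1) * ∑ j, |A i j| * |v j| ^ q := by
        rw [Real.mul_rpow (by positivity) (by positivity), ← Real.rpow_mul hrow,
          ← Real.rpow_mul hsum, inv_mul_cancel₀ (by linarith), Real.rpow_one, sub_mul,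
          inv_mul_cancel₀ (by linarith), one_mul]

end RowColumnSums

section SchurTest

variable {m n : ℕ} {A : Matrix (Fin m) (Fin n) ℝ}

lemma ENNReal.one_lt_toReal_of_lt {p : ℝ≥0∞} (hp1 : 1 < p) (hp2 : p ≠ ⊤) : 1 < p.toReal := by
  simpa using (ENNReal.toReal_lt_toReal ENNReal.one_ne_top hp2).2 hp1

/-- Schur test, with the row sums of `|A|` to the power `p - 1` as weights. -/
lemma lpNorm_mulVec_le_of_weighted_colSum_le {p : ℝ≥0∞} (hp1 : 1 < p) (hp2 : p ≠ ⊤) {C : ℝ}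
    (hC : 0 ≤ C) (h : ∀ j, ∑ i, (∑ l, |A i l|) ^ (p.toReal - 1) * |A i j| ≤ C)
    (v : Fin n → ℝ) : lpNorm p (A *ᵥ v) ≤ C ^ (1 / p.toReal) * lpNorm p v := by
  set q := p.toReal
  have hq := ENNReal.one_lt_toReal_of_lt hp1 hp2
  have hsum : ∑ i, |(A *ᵥ v) i| ^ q ≤ C * ∑ j, |v j| ^ q :=
    calc ∑ i, |(A *ᵥ v) i| ^ q ≤ ∑ i, (∑ l, |A i l|) ^ (q - 1) * ∑ j, |A i j| * |v j| ^ q :=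
          sum_le_sum fun i _ => abs_mulVec_rpow_le A hq v i
      _ = ∑ j, (∑ i, (∑ l, |A i l|) ^ (q - 1) * |A i j|) * |v j| ^ q := by
          simp only [mul_sum, sum_mul, mul_assoc]; exact sum_comm
      _ ≤ ∑ j, C * |v j| ^ q := sum_le_sum fun j _ => mul_le_mul_of_nonneg_right (h j) (by positivity)
      _ = C * ∑ j, |v j| ^ q := (mul_sum _ _ _).symm
  rw [lpNorm_of_ne_top hp2, lpNorm_of_ne_top hp2, ← Real.mul_rpow hC (by positivity)]
  exact Real.rpow_le_rpow (by positivity) hsum (by positivity)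

lemma opNorm_lt_of_weighted_colSum_lt_rpow [NeZero n] {p : ℝ≥0∞} (hp1 : 1 < p) (hp2 : p ≠ ⊤) {r : ℝ}
    (hr : 0 ≤ r) (h : ∀ j, ∑ i, (∑ l, |A i l|) ^ (p.toReal - 1) * |A i j| < r ^ p.toReal) :
    opNorm p A < r := by
  set c : Fin n → ℝ := fun j => ∑ i, (∑ l, |A i l|) ^ (p.toReal - 1) * |A i j|
  set C := univ.sup' univ_nonempty c
  have hq := ENNReal.one_lt_toReal_of_lt hp1 hp2
  have hC : 0 ≤ C := (sum_nonneg fun i _ => by positivity).trans (le_sup' c (mem_univ 0))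
  have hCr : C < r ^ p.toReal := (sup'_lt_iff _).2 fun j _ => h j
  calc opNorm p A ≤ C ^ (1 / p.toReal) := opNorm_le_of_forall_le (by positivity)
        (lpNorm_mulVec_le_of_weighted_colSum_le hp1 hp2 hC fun j => le_sup' c (mem_univ j))
    _ < (r ^ p.toReal) ^ (1 / p.toReal) := Real.rpow_lt_rpow hC hCr (by positivity)
    _ = r := by rw [one_div, Real.rpow_rpow_inv hr (by positivity)]

lemma weighted_colSum_lt_rpow {q : ℝ} (hq : 1 < q) {r : ℝ} (hrow : ∀ i, ∑ l, |A i l| ≤ r) {j : Fin n}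
    (hcol : ∑ i, |A i j| ≤ r) (hstrict : ∑ i, |A i j| < r ∨ ∃ i, A i j ≠ 0 ∧ ∑ l, |A i l| < r) :
    ∑ i, (∑ l, |A i l|) ^ (q - 1) * |A i j| < r ^ q := by
  have hrow₀ : ∀ i, 0 ≤ ∑ l, |A i l| := fun i => sum_nonneg fun l _ => abs_nonneg _
  have hr : 0 < r := hstrict.elim ((sum_nonneg fun _ _ => abs_nonneg _).trans_lt)
    fun ⟨i, _, hi⟩ => (hrow₀ i).trans_lt hi
  have hterm : ∀ i, (∑ l, |A i l|) ^ (q - 1) * |A i j| ≤ r ^ (q - 1) * |A i j| := fun i =>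
    mul_le_mul_of_nonneg_right (Real.rpow_le_rpow (hrow₀ i) (hrow i) (by linarith)) (abs_nonneg _)
  have hrq : r ^ (q - 1) * r = r ^ q := by rw [← Real.rpow_add_one hr.ne', sub_add_cancel]
  rw [← hrq]
  rcases hstrict with hlt | ⟨i, hi, hri⟩
  · calc _ ≤ ∑ i, r ^ (q - 1) * |A i j| := sum_le_sum fun i _ => hterm i
      _ = r ^ (q - 1) * ∑ i, |A i j| := (mul_sum _ _ _).symm
      _ < r ^ (q - 1) * r := mul_lt_mul_of_pos_left hlt (by positivity)
  · calc _ < ∑ i, r ^ (q - 1) * |A i j| := sum_lt_sum (fun i _ => hterm i) ⟨i, mem_univ i,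
          mul_lt_mul_of_pos_right (Real.rpow_lt_rpow (hrow₀ i) hri (by linarith)) (abs_pos.2 hi)⟩
      _ = r ^ (q - 1) * ∑ i, |A i j| := (mul_sum _ _ _).symm
      _ ≤ r ^ (q - 1) * r := mul_le_mul_of_nonneg_left hcol (by positivity)

theorem opNorm_lt_of_rowSum_colSum_le [NeZero n] {p : ℝ≥0∞} (hp1 : 1 < p) (hp2 : p ≠ ⊤) {r : ℝ}
    (hrow : ∀ i, ∑ l, |A i l| ≤ r) (hcol : ∀ j, ∑ i, |A i j| ≤ r)
    (hstrict : ∀ j, ∑ i, |A i j| < r ∨ ∃ i, A i j ≠ 0 ∧ ∑ l, |A i l| < r) :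
    opNorm p A < r :=
  opNorm_lt_of_weighted_colSum_lt_rpow hp1 hp2 ((sum_nonneg fun _ _ => abs_nonneg _).trans (hcol 0))
    fun j => weighted_colSum_lt_rpow (ENNReal.one_lt_toReal_of_lt hp1 hp2) hrow (hcol j) (hstrict j)

end SchurTest

lemma two_mul_mul_one_sub_le_half (x : ℝ) : 2 * (x * (1 - x)) ≤ 1 / 2 := by
  nlinarith [sq_nonneg (2 * x - 1)]

lemma two_mul_mul_one_sub_lt_half {x : ℝ} (hx : x ≠ 1 / 2) : 2 * (x * (1 - x)) < 1 / 2 := by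
  nlinarith [sq_pos_of_ne_zero (sub_ne_zero.2 hx)]

section SoftmaxJac

variable {n : ℕ} {s : Fin n → ℝ}

lemma softmaxJac_apply (s : Fin n → ℝ) (i j : Fin n) :
    softmaxJac s i j = (if i = j then s i else 0) - s i * s j := by
  simp [softmaxJac, diagonal_apply, vecMulVec_apply]

lemma softmaxJac_comm (s : Fin n → ℝ) (i j : Fin n) : softmaxJac s i j = softmaxJac s j i := by
  rcases eq_or_ne i j with rfl | hij
  · rfl
  · rw [softmaxJac_apply, softmaxJac_apply, if_neg hij, if_neg hij.symm, mul_comm]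

lemma le_one_of_mem_probSimplex (hs : s ∈ probSimplex n) (i : Fin n) : s i ≤ 1 :=
  hs.2 ▸ single_le_sum (fun j _ => hs.1 j) (mem_univ i)

lemma abs_softmaxJac (hs : s ∈ probSimplex n) (i j : Fin n) :
    |softmaxJac s i j| = if i = j then s i * (1 - s i) else s i * s j := by
  have := hs.1 i
  have := le_one_of_mem_probSimplex hs i
  rw [softmaxJac_apply]
  split_ifs with hij
  · subst hij
    rw [abs_of_nonneg (by nlinarith)]
    ring
  · rw [zero_sub, abs_neg, abs_of_nonneg (mul_nonneg (hs.1 i) (hs.1 j))]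

lemma sum_abs_softmaxJac_row (hs : s ∈ probSimplex n) (i : Fin n) :
    ∑ j, |softmaxJac s i j| = 2 * (s i * (1 - s i)) := by
  have hrest : ∑ j ∈ univ.erase i, s j = 1 - s i := by
    rw [← hs.2, ← add_sum_erase _ _ (mem_univ i), add_sub_cancel_left]
  rw [← add_sum_erase _ _ (mem_univ i), abs_softmaxJac hs, if_pos rfl,
    sum_congr rfl fun j hj => by rw [abs_softmaxJac hs, if_neg (ne_of_mem_erase hj).symm],
    ← mul_sum, hrest]
  ring

lemma sum_abs_softmaxJac_col (hs : s ∈ probSimplex n) (j : Fin n) :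
    ∑ i, |softmaxJac s i j| = 2 * (s j * (1 - s j)) := by
  simp only [softmaxJac_comm s _ j, sum_abs_softmaxJac_row hs]

variable {k : Fin n}

lemma opNorm_one_softmaxJac (hs : s ∈ probSimplex n) (hk : s k = 1 / 2) :
    opNorm 1 (softmaxJac s) = 1 / 2 := by
  refine opNorm_eq_of_forall_le_of_le (by norm_num) (lpNorm_one_mulVec_le _ fun j => ?_)
    (v₀ := Pi.single k 1) (by simp) (le_of_eq ?_)
  · rw [sum_abs_softmaxJac_col hs]
    exact two_mul_mul_one_sub_le_half _
  · norm_num [sum_abs_softmaxJac_col hs, hk, Pi.single_apply, apply_ite]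

lemma opNorm_top_softmaxJac (hs : s ∈ probSimplex n) (hk : s k = 1 / 2) :
    opNorm ⊤ (softmaxJac s) = 1 / 2 := by
  set w : Fin n → ℝ := fun j => if j = k then 1 else -1
  have hw : lpNorm ⊤ w ≤ 1 := (lpNorm_top w).trans_le <|
    Real.iSup_le (fun j => by dsimp only [w]; split_ifs <;> norm_num) zero_le_one
  have hrow : (softmaxJac s *ᵥ w) k = 1 / 2 := by
    have hsign : ∀ j, softmaxJac s k j * w j = |softmaxJac s k j| := fun j => by
      rw [abs_softmaxJac hs, softmaxJac_apply]
      dsimp only [w]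
      rcases eq_or_ne k j with rfl | hkj
      · simp only [if_true]; ring
      · simp only [if_neg hkj, if_neg hkj.symm]; ring
    rw [mulVec, dotProduct, sum_congr rfl fun j _ => hsign j, sum_abs_softmaxJac_row hs, hk]
    norm_num
  refine opNorm_eq_of_forall_le_of_le (by norm_num)
    (lpNorm_top_mulVec_le _ (by norm_num) fun i => ?_) (v₀ := w) ?_ ?_
  · rw [sum_abs_softmaxJac_row hs]
    exact two_mul_mul_one_sub_le_half _
  · exact Function.ne_iff.2 ⟨k, by simp [w]⟩
  · calc 1 / 2 * lpNorm ⊤ w ≤ 1 / 2 := by linarith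
      _ = |(softmaxJac s *ᵥ w) k| := by rw [hrow]; norm_num
      _ ≤ lpNorm ⊤ (softmaxJac s *ᵥ w) := abs_le_lpNorm_top _ k

lemma exists_ne_ne_of_two_lt_card_support
    (hsupp : 2 < (Finset.univ.filter (fun i => s i ≠ 0)).card) (j k : Fin n) :
    ∃ i, s i ≠ 0 ∧ i ≠ j ∧ i ≠ k := by
  by_contra! h
  have hsub : Finset.univ.filter (fun i => s i ≠ 0) ⊆ {j, k} := fun i hi => by
    rw [mem_filter] at hi
    rw [mem_insert, mem_singleton, or_iff_not_imp_left]
    exact h i hi.2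
  exact (card_le_card hsub).trans card_le_two |>.not_gt hsupp

lemma lt_half_of_ne (hs : s ∈ probSimplex n)
    (hsupp : 2 < (Finset.univ.filter (fun i => s i ≠ 0)).card) (hk : s k = 1 / 2) {j : Fin n}
    (hjk : j ≠ k) : s j < 1 / 2 := by
  obtain ⟨i, hi, hij, hik⟩ := exists_ne_ne_of_two_lt_card_support hsupp j k
  have hle : s i + (s j + s k) ≤ 1 := by
    rw [← sum_pair hjk, ← sum_insert (by simp [hij, hik]), ← hs.2]
    exact sum_le_univ_sum_of_nonneg hs.1
  linarith [(hs.1 i).lt_of_ne' hi]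

lemma opNorm_softmaxJac_lt_half {p : ℝ≥0∞} (hp1 : 1 < p) (hp2 : p ≠ ⊤) (hs : s ∈ probSimplex n)
    (hsupp : 2 < (Finset.univ.filter (fun i => s i ≠ 0)).card) (hk : s k = 1 / 2) :
    opNorm p (softmaxJac s) < 1 / 2 := by
  have : NeZero n := ⟨k.pos.ne'⟩
  refine opNorm_lt_of_rowSum_colSum_le hp1 hp2 (fun i => ?_) (fun j => ?_) (fun j => ?_)
  · exact (sum_abs_softmaxJac_row hs i).trans_le (two_mul_mul_one_sub_le_half _)
  · exact (sum_abs_softmaxJac_col hs j).trans_le (two_mul_mul_one_sub_le_half _)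
  rw [sum_abs_softmaxJac_col hs]
  rcases eq_or_ne j k with rfl | hjk
  · obtain ⟨i, hi, hij, -⟩ := exists_ne_ne_of_two_lt_card_support hsupp j j
    refine .inr ⟨i, ?_, ?_⟩
    · rw [softmaxJac_apply, if_neg hij, hk]
      simpa using hi
    · rw [sum_abs_softmaxJac_row hs]
      exact two_mul_mul_one_sub_lt_half (lt_half_of_ne hs hsupp hk hij).ne
  · exact .inl (two_mul_mul_one_sub_lt_half (lt_half_of_ne hs hsupp hk hjk).ne)

end SoftmaxJac

theorem strict_interpolation_large_support_general {n : ℕ}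
    (p : ℝ≥0∞) (hp1 : 1 < p) (hp2 : p ≠ ⊤)
    (s : Fin n → ℝ) (hs : s ∈ probSimplex n)
    (hsupp : 2 < (Finset.univ.filter (fun i => s i ≠ 0)).card)
    (hhalf : ∃ i : Fin n, s i = 1 / 2) :
    opNorm p (softmaxJac s) <
      opNorm 1 (softmaxJac s) ^ p⁻¹.toReal *
        opNorm ⊤ (softmaxJac s) ^ (1 - p⁻¹.toReal) ∧
    opNorm 1 (softmaxJac s) ^ p⁻¹.toReal *
        opNorm ⊤ (softmaxJac s) ^ (1 - p⁻¹.toReal) = 1 / 2 := by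
  obtain ⟨k, hk⟩ := hhalf
  have hrhs : opNorm 1 (softmaxJac s) ^ p⁻¹.toReal *
      opNorm ⊤ (softmaxJac s) ^ (1 - p⁻¹.toReal) = 1 / 2 := by
    rw [opNorm_one_softmaxJac hs hk, opNorm_top_softmaxJac hs hk,
      ← Real.rpow_add (by norm_num), add_sub_cancel, Real.rpow_one]
  exact ⟨hrhs ▸ opNorm_softmaxJac_lt_half hp1 hp2 hs hsupp hk, hrhs⟩

/-- for s in the simplex with support size > 2 and some coordinate equal to 1/2,
the interpolation inequality is strict for `M(s)`, with right-hand side equal to 1/2. -/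
theorem strict_interpolation_large_support {n : ℕ} (hn : 2 < n)
    (p : ℝ≥0∞) (hp1 : 1 < p) (hp2 : p ≠ ⊤)
    (s : Fin n → ℝ) (hs : s ∈ probSimplex n)
    (hsupp : 2 < (Finset.univ.filter (fun i => s i ≠ 0)).card)
    (hhalf : ∃ i : Fin n, s i = 1 / 2) :
    opNorm p (softmaxJac s) <
      opNorm 1 (softmaxJac s) ^ p⁻¹.toReal *
        opNorm ⊤ (softmaxJac s) ^ (1 - p⁻¹.toReal) ∧
    opNorm 1 (softmaxJac s) ^ p⁻¹.toReal *
        opNorm ⊤ (softmaxJac s) ^ (1 - p⁻¹.toReal) = 1 / 2 :=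
  strict_interpolation_large_support_general p hp1 hp2 s hs hsupp hhalf
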